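/- Let C be a simple cycle through x and y contained in a set Q, with z a neighbor of y on C, z ∈ Q, and suppose δ(y) = d(x,y), δ(z) = d(x,z), and δ(p) ≥ 0 for a vertex p. Then the detected cycle length ℓ(C') = δ(y) + δ(z) + w(y,z) − 2δ(p) satisfies ℓ(C') ≤ ℓ(C). -/

import Mathlib

open scoped ENNReal

/-- Weighted length of a walk: sum of the weights of its edges. -/
noncomputable def wlen {V : Type*} {G : SimpleGraph V} (w : Sym2 V → NNReal) {u v : V}
    (p : G.Walk u v) : ℝ≥0∞ :=
  (p.edges.map (fun e => ((w e : NNReal) : ℝ≥0∞))).sum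

/-- Shortest-path distance between two vertices (∞ if no path exists). -/
noncomputable def wdist {V : Type*} (G : SimpleGraph V) (w : Sym2 V → NNReal) (x y : V) : ℝ≥0∞ :=
  ⨅ (p : {p : G.Walk x y // p.IsPath}), wlen w p.1

/-- Distance from a vertex to a cycle: minimum distance to a vertex of the cycle. -/
noncomputable def dcyc {V : Type*} (G : SimpleGraph V) (w : Sym2 V → NNReal) (x : V) {a : V}
    (c : G.Walk a a) : ℝ≥0∞ :=
  ⨅ y ∈ c.support, wdist G w x y

/-!
Cut the closed walk at `x` and split it at the edge `yz`: what remains consists of a walk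
between `x` and `y` and a walk between `z` and `x`, which are at least `d(x,y)` and `d(x,z)` long.
The subtracted term `2 δ(p)` can only decrease the left-hand side.
-/

open SimpleGraph SimpleGraph.Walk

section WeightedDistance

variable {V : Type*} {G : SimpleGraph V} {w : Sym2 V → NNReal}

lemma wlen_append {u v t : V} (q : G.Walk u v) (r : G.Walk v t) :
    wlen w (q.append r) = wlen w q + wlen w r := by
  simp [wlen, edges_append]

lemma wlen_reverse {u v : V} (q : G.Walk u v) : wlen w q.reverse = wlen w q := by
  simp [wlen, edges_reverse]

lemma wlen_rotate [DecidableEq V] {v : V} (c : G.Walk v v) (u : V) (h : u ∈ c.support) :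
    wlen w (c.rotate u h) = wlen w c :=
  ((rotate_edges c u h).perm.map _).sum_eq

lemma wlen_toWalk {u v : V} (h : G.Adj u v) :
    wlen w h.toWalk = w s(u, v) := by
  simp [wlen]

lemma wdist_le_wlen {u v : V} (q : G.Walk u v) : wdist G w u v ≤ wlen w q := by
  classical
  refine (iInf_le _ ⟨q.bypass, q.bypass_isPath⟩).trans ?_
  obtain ⟨l, hperm, hsub⟩ :=
    List.subperm_of_subset q.bypass_isPath.isTrail.edges_nodup q.edges_bypass_subset_edges
  calc wlen w q.bypass = (l.map fun e => ((w e : NNReal) : ℝ≥0∞)).sum :=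
        (hperm.map _).sum_eq.symm
    _ ≤ wlen w q := (hsub.map _).sum_le_sum fun _ _ => zero_le

lemma wdist_comm (u v : V) : wdist G w u v = wdist G w v u := by
  suffices ∀ u v : V, wdist G w v u ≤ wdist G w u v from le_antisymm (this v u) (this u v)
  intro u v
  exact le_iInf fun p => (wdist_le_wlen p.1.reverse).trans_eq (wlen_reverse p.1)

lemma wdist_add_add_wdist_le_wlen_of_isSubwalk {u v y z : V} {q : G.Walk u v} (h : G.Adj y z)
    (hq : h.toWalk.IsSubwalk q) :
    wdist G w u y + w s(y, z) + wdist G w z v ≤ wlen w q := by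
  obtain ⟨ru, rv, rfl⟩ := hq
  rw [wlen_append, wlen_append, wlen_toWalk h]
  gcongr <;> exact wdist_le_wlen _

lemma wdist_add_wdist_add_le_wlen_of_mem_edges {a x y z : V} (c : G.Walk a a)
    (hx : x ∈ c.support) (hyz : s(y, z) ∈ c.edges) :
    wdist G w x y + wdist G w x z + w s(y, z) ≤ wlen w c := by
  classical
  have hyz' : s(y, z) ∈ (c.rotate x hx).edges := (rotate_edges c x hx).perm.mem_iff.mpr hyz
  have h : G.Adj y z := (c.rotate x hx).adj_of_mem_edges hyz'
  rw [← wlen_rotate c x hx]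
  rcases (isSubwalk_toWalk_iff_mem_edges h).mpr hyz' with hsub | hsub
  · calc wdist G w x y + wdist G w x z + w s(y, z)
        = wdist G w x y + w s(y, z) + wdist G w z x := by rw [wdist_comm x z]; ring
      _ ≤ _ := wdist_add_add_wdist_le_wlen_of_isSubwalk h hsub
  · calc wdist G w x y + wdist G w x z + w s(y, z)
        = wdist G w x z + w s(z, y) + wdist G w y x := by
          rw [wdist_comm x y, Sym2.eq_swap]; ring
      _ ≤ _ := wdist_add_add_wdist_le_wlen_of_isSubwalk h.symm hsub

end WeightedDistance

theorem stmt15_general {V : Type*} (G : SimpleGraph V) (w : Sym2 V → NNReal)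
    (x y z p : V)
    {a : V} (C : G.Walk a a)
    (hx : x ∈ C.support) (hedge : s(y, z) ∈ C.edges)
    (δ : V → ℝ≥0∞)
    (hδy : δ y = wdist G w x y) (hδz : δ z = wdist G w x z) :
    δ y + δ z + (w s(y, z) : ℝ≥0∞) - 2 * δ p ≤ wlen w C := by
  rw [hδy, hδz]
  exact tsub_le_self.trans (wdist_add_wdist_add_le_wlen_of_mem_edges C hx hedge)

/-- for a simple cycle C through x containing the edge (y,z), contained in Q,
with δ(y) = d(x,y), δ(z) = d(x,z) and δ(p) ≥ 0, the detected cycle length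
ℓ(C') = δ(y) + δ(z) + w(y,z) − 2δ(p) satisfies ℓ(C') ≤ ℓ(C). -/
theorem stmt15 {V : Type*} (G : SimpleGraph V) (w : Sym2 V → NNReal)
    (hw : ∀ e ∈ G.edgeSet, 0 < w e) (x y z p : V) (Q : Set V)
    {a : V} (C : G.Walk a a) (hC : C.IsCycle)
    (hx : x ∈ C.support) (hedge : s(y, z) ∈ C.edges)
    (hQ : ∀ u ∈ C.support, u ∈ Q) (hyQ : y ∈ Q) (hzQ : z ∈ Q)
    (δ : V → ℝ≥0∞)
    (hδy : δ y = wdist G w x y) (hδz : δ z = wdist G w x z) (hδp : 0 ≤ δ p) :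
    δ y + δ z + (w s(y, z) : ℝ≥0∞) - 2 * δ p ≤ wlen w C :=
  stmt15_general G w x y z p C hx hedge δ hδy hδz
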